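/- arXiv:1709.06336 — 4 statements merged into one kernel-verified Lean document; each statement's English description precedes it below -/
import Mathlib

section
/- Let ω be analytic on the unit disk with |ω(z)| ≤ 1 for all z, and define C_ω(z) = 1/z + λ ∫₀^z ω(t) dt for z ≠ 0 in the closed unit disk, where 0 < λ < 1. Then C_ω is injective on the closed unit disk minus the origin. -/
open Metric Complex MeasureTheory Set Filter
open scoped Topology NNReal

/-!
The map `F z = ∫₀¹ ω (t z) z dt` is the integral of `ω` along the segment `[0, z]`. On the open
disk it is a primitive of `ω` (compare it with the primitive given by Morera's theorem), so the
mean value inequality makes it `1`-Lipschitz there; dominated convergence makes it continuous on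
the closed disk, hence `1`-Lipschitz on the closed disk too. If now `1/z₁ + λ F z₁ = 1/z₂ + λ F z₂`
with `z₁ ≠ z₂`, then `z₂ - z₁ = λ (F z₂ - F z₁) z₁ z₂`, whose norm is at most `λ ‖z₂ - z₁‖`,
impossible for `λ < 1`.
-/

noncomputable def radialPrimitive (ω : ℂ → ℂ) (z : ℂ) : ℂ :=
  ∫ t in (0:ℝ)..1, ω ((t:ℂ) * z) * z

lemma ofReal_mul_mem_ball {r t : ℝ} {z : ℂ} (ht : t ∈ Icc (0:ℝ) 1) (hz : z ∈ ball (0:ℂ) r) :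
    (t:ℂ) * z ∈ ball (0:ℂ) r := by
  rw [mem_ball_zero_iff] at hz ⊢
  rw [norm_mul, norm_real, Real.norm_of_nonneg ht.1]
  exact (mul_le_of_le_one_left (norm_nonneg z) ht.2).trans_lt hz

lemma ofReal_mul_mem_ball_of_mem_closedBall {r t : ℝ} {z : ℂ} (hr : 0 < r)
    (ht : t ∈ Ico (0:ℝ) 1) (hz : z ∈ closedBall (0:ℂ) r) : (t:ℂ) * z ∈ ball (0:ℂ) r := by
  rw [mem_closedBall_zero_iff] at hz
  rw [mem_ball_zero_iff, norm_mul, norm_real, Real.norm_of_nonneg ht.1]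
  calc t * ‖z‖ ≤ t * r := by gcongr; exact ht.1
    _ < r := mul_lt_of_lt_one_left hr ht.2

lemma radialPrimitive_eq_sub {ω g : ℂ → ℂ} {r : ℝ} (hω : ContinuousOn ω (ball 0 r))
    (hg : ∀ w ∈ ball (0:ℂ) r, HasDerivAt g (ω w) w) {z : ℂ} (hz : z ∈ ball (0:ℂ) r) :
    radialPrimitive ω z = g z - g 0 := by
  have hmem : ∀ t ∈ uIcc (0:ℝ) 1, (t:ℂ) * z ∈ ball (0:ℂ) r := fun t ht =>
    ofReal_mul_mem_ball (by rwa [uIcc_of_le zero_le_one] at ht) hz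
  have hderiv : ∀ t ∈ uIcc (0:ℝ) 1,
      HasDerivAt (fun t : ℝ => g ((t:ℂ) * z)) (ω ((t:ℂ) * z) * z) t := by
    intro t ht
    have hline : HasDerivAt (fun t : ℝ => (t:ℂ) * z) z t := by
      simpa using (hasDerivAt_id t).ofReal_comp.mul_const z
    exact (hg _ (hmem t ht)).comp t hline
  have hint : IntervalIntegrable (fun t : ℝ => ω ((t:ℂ) * z) * z) volume 0 1 :=
    ((hω.comp (by fun_prop) hmem).mul continuousOn_const).intervalIntegrable
  rw [radialPrimitive, intervalIntegral.integral_eq_sub_of_hasDerivAt hderiv hint]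
  simp

lemma hasDerivAt_radialPrimitive {ω : ℂ → ℂ} {r : ℝ} (hω : DifferentiableOn ℂ ω (ball 0 r))
    {z : ℂ} (hz : z ∈ ball (0:ℂ) r) : HasDerivAt (radialPrimitive ω) (ω z) z := by
  obtain ⟨g, hg⟩ := hω.isExactOn_ball
  have hFg : radialPrimitive ω =ᶠ[𝓝 z] fun w => g w - g 0 :=
    eventually_of_mem (isOpen_ball.mem_nhds hz) fun w hw =>
      radialPrimitive_eq_sub hω.continuousOn hg hw
  exact ((hg z hz).sub_const (g 0)).congr_of_eventuallyEq hFg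

lemma lipschitzOnWith_radialPrimitive_ball {ω : ℂ → ℂ} {r : ℝ} {C : ℝ≥0}
    (hω : DifferentiableOn ℂ ω (ball 0 r)) (hC : ∀ w ∈ ball (0:ℂ) r, ‖ω w‖ ≤ C) :
    LipschitzOnWith C (radialPrimitive ω) (ball 0 r) :=
  (convex_ball 0 r).lipschitzOnWith_of_nnnorm_hasDerivWithin_le
    (fun _ hw => (hasDerivAt_radialPrimitive hω hw).hasDerivWithinAt)
    (fun w hw => by exact_mod_cast hC w hw)

lemma continuousOn_radialPrimitive_closedBall {ω : ℂ → ℂ} {r : ℝ} {C : ℝ≥0} (hr : 0 < r)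
    (hω : ContinuousOn ω (ball 0 r)) (hC : ∀ w ∈ ball (0:ℂ) r, ‖ω w‖ ≤ C) :
    ContinuousOn (radialPrimitive ω) (closedBall 0 r) := by
  intro z hz
  refine intervalIntegral.continuousWithinAt_of_dominated_interval
    (bound := fun _ => C * r) ?_ ?_ intervalIntegrable_const ?_
  · filter_upwards [self_mem_nhdsWithin] with x hx
    rw [uIoc_of_le zero_le_one, ← Measure.restrict_congr_set Ioo_ae_eq_Ioc]
    refine ((hω.comp (by fun_prop) fun t ht => ?_).mul continuousOn_const).aestronglyMeasurable
      measurableSet_Ioo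
    exact ofReal_mul_mem_ball_of_mem_closedBall hr ⟨ht.1.le, ht.2⟩ hx
  -- `t = 1` has to be discarded: `ω` is not controlled on the boundary circle.
  · filter_upwards [self_mem_nhdsWithin] with x hx
    filter_upwards [volume.ae_ne 1] with t ht₁ ht
    rw [uIoc_of_le zero_le_one] at ht
    rw [norm_mul]
    exact mul_le_mul (hC _ (ofReal_mul_mem_ball_of_mem_closedBall hr
      ⟨ht.1.le, ht.2.lt_of_ne ht₁⟩ hx)) (mem_closedBall_zero_iff.mp hx) (norm_nonneg _) C.2
  · filter_upwards [volume.ae_ne 1] with t ht₁ ht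
    rw [uIoc_of_le zero_le_one] at ht
    have hmem := ofReal_mul_mem_ball_of_mem_closedBall hr ⟨ht.1.le, ht.2.lt_of_ne ht₁⟩ hz
    exact (((hω.continuousAt (isOpen_ball.mem_nhds hmem)).comp
      (by fun_prop : ContinuousAt (fun x => (t:ℂ) * x) z)).mul continuousAt_id).continuousWithinAt

lemma lipschitzOnWith_radialPrimitive_closedBall {ω : ℂ → ℂ} {r : ℝ} {C : ℝ≥0} (hr : 0 < r)
    (hω : DifferentiableOn ℂ ω (ball 0 r)) (hC : ∀ w ∈ ball (0:ℂ) r, ‖ω w‖ ≤ C) :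
    LipschitzOnWith C (radialPrimitive ω) (closedBall 0 r) := by
  rw [← closure_ball (0:ℂ) hr.ne']
  refine (lipschitzOnWith_radialPrimitive_ball hω hC).closure ?_
  rw [closure_ball (0:ℂ) hr.ne']
  exact continuousOn_radialPrimitive_closedBall hr hω.continuousOn hC

lemma injOn_inv_add_mul_of_lipschitzOnWith {G : ℂ → ℂ} {S : Set ℂ} {K : ℝ≥0} {c : ℂ}
    (hS : S ⊆ closedBall 0 1) (hG : LipschitzOnWith K G S) (hc : ‖c‖ * K < 1) :
    InjOn (fun z => 1 / z + c * G z) (S \ {0}) := by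
  rintro z₁ ⟨hz₁, hz₁0 : z₁ ≠ 0⟩ z₂ ⟨hz₂, hz₂0 : z₂ ≠ 0⟩ heq
  by_contra hne
  have hsub : z₂ - z₁ = c * (G z₂ - G z₁) * (z₁ * z₂) := by
    field_simp at heq
    linear_combination heq
  have hGle : ‖G z₂ - G z₁‖ ≤ K * ‖z₂ - z₁‖ := by
    simpa [dist_eq_norm] using hG.dist_le_mul z₂ hz₂ z₁ hz₁
  have hprod : ‖z₁ * z₂‖ ≤ 1 := by
    rw [norm_mul]
    exact mul_le_one₀ (mem_closedBall_zero_iff.mp (hS hz₁)) (norm_nonneg _)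
      (mem_closedBall_zero_iff.mp (hS hz₂))
  have hpos : 0 < ‖z₂ - z₁‖ := norm_pos_iff.mpr (sub_ne_zero.mpr (Ne.symm hne))
  have hle : ‖z₂ - z₁‖ ≤ ‖c‖ * K * ‖z₂ - z₁‖ :=
    calc ‖z₂ - z₁‖ = ‖c‖ * ‖G z₂ - G z₁‖ * ‖z₁ * z₂‖ := by rw [hsub, norm_mul, norm_mul]
      _ ≤ ‖c‖ * (K * ‖z₂ - z₁‖) * 1 := by gcongr
      _ = ‖c‖ * K * ‖z₂ - z₁‖ := by ring
  nlinarith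

theorem stmt_9 (lam : ℝ) (hlam : 0 < lam) (hlam1 : lam < 1)
    (ω : ℂ → ℂ)
    (hω : DifferentiableOn ℂ ω (ball (0:ℂ) 1))
    (hbound : ∀ z ∈ ball (0:ℂ) 1, ‖ω z‖ ≤ 1) :
    Set.InjOn (fun z => 1 / z + (lam:ℂ) * ∫ t in (0:ℝ)..1, ω ((t:ℂ) * z) * z)
      (closedBall (0:ℂ) 1 \ {0}) := by
  have hLip : LipschitzOnWith 1 (radialPrimitive ω) (closedBall 0 1) :=
    lipschitzOnWith_radialPrimitive_closedBall one_pos hω (by simpa using hbound)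
  refine injOn_inv_add_mul_of_lipschitzOnWith subset_rfl hLip ?_
  simpa [abs_of_pos hlam] using hlam1
end

section
/- Fix 0 < λ < 1 and a ∈ (0,1). Let ω(z) = (z + a)/(1 + az) and v(a) = ∫₀¹ ω(t) dt. Then the function G(z) = 1 − z − λ z ∫_z^1 ω(t) dt has no zeros in the open unit disk. -/
/-!
For real `a` with `|a| ≤ 1` the Möbius map `ω w = (w + a) / (1 + a w)` sends the closed unit disk
into itself, so the integral of `ω` along the segment from `z` to `1` has modulus at most `|1 - z|`.
If `G z = 0` then `1 - z = λ z ∫_z^1 ω`, whence `|1 - z| ≤ λ |z| |1 - z| < |1 - z|`.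
-/

open Metric Complex

theorem norm_add_ofReal_le_norm_one_add_ofReal_mul {a : ℝ} (ha : |a| ≤ 1) {w : ℂ}
    (hw : ‖w‖ ≤ 1) : ‖w + a‖ ≤ ‖1 + a * w‖ := by
  have ha2 : a ^ 2 ≤ 1 := by nlinarith [sq_abs a, abs_nonneg a]
  have hw2 : normSq w ≤ 1 := by
    rw [← Complex.sq_norm]; nlinarith [norm_nonneg w]
  have key : normSq (1 + a * w) - normSq (w + a) = (1 - a ^ 2) * (1 - normSq w) := by
    simp only [normSq_apply, add_re, add_im, mul_re, mul_im, ofReal_re, ofReal_im, one_re,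
      one_im]
    ring
  rw [← sq_le_sq₀ (norm_nonneg _) (norm_nonneg _), Complex.sq_norm, Complex.sq_norm]
  nlinarith [mul_nonneg (sub_nonneg.2 ha2) (sub_nonneg.2 hw2)]

theorem norm_mobius_le_one {a : ℝ} (ha : |a| ≤ 1) {w : ℂ} (hw : ‖w‖ ≤ 1) :
    ‖(w + a) / (1 + a * w)‖ ≤ 1 := by
  rw [norm_div]
  exact div_le_one_of_le₀ (norm_add_ofReal_le_norm_one_add_ofReal_mul ha hw) (norm_nonneg _)

theorem norm_integral_segment_le {f : ℂ → ℂ} {s : Set ℂ} (hs : Convex ℝ s) {C : ℝ}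
    (hf : ∀ w ∈ s, ‖f w‖ ≤ C) {z w : ℂ} (hz : z ∈ s) (hw : w ∈ s) :
    ‖∫ t in (0:ℝ)..1, f (z + (t:ℂ) * (w - z)) * (w - z)‖ ≤ C * ‖w - z‖ := by
  have h := intervalIntegral.norm_integral_le_of_norm_le_const (a := 0) (b := 1)
    (C := C * ‖w - z‖) (f := fun t : ℝ => f (z + (t:ℂ) * (w - z)) * (w - z)) ?_
  · simpa using h
  intro t ht
  rw [Set.uIoc_of_le zero_le_one] at ht
  have hmem : z + (t:ℂ) * (w - z) ∈ s := by
    simpa [real_smul] using hs.add_smul_sub_mem hz hw ⟨ht.1.le, ht.2⟩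
  rw [norm_mul]
  exact mul_le_mul_of_nonneg_right (hf _ hmem) (norm_nonneg _)

theorem one_sub_sub_mul_ne_zero {c z I : ℂ} (hcz : ‖c * z‖ < 1) (hz : z ≠ 1)
    (hI : ‖I‖ ≤ ‖1 - z‖) : 1 - z - c * z * I ≠ 0 := by
  intro h
  have hpos : 0 < ‖1 - z‖ := norm_pos_iff.2 (sub_ne_zero.2 hz.symm)
  have : ‖1 - z‖ < ‖1 - z‖ :=
    calc ‖1 - z‖ = ‖c * z‖ * ‖I‖ := by rw [sub_eq_zero.1 h, norm_mul]
      _ ≤ ‖c * z‖ * ‖1 - z‖ := by gcongr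
      _ < ‖1 - z‖ := mul_lt_of_lt_one_left hpos hcz
  exact this.false

theorem stmt_10 (lam a : ℝ) (hlam : 0 < lam) (hlam1 : lam < 1)
    (ha : 0 < a) (ha1 : a < 1)
    (ω : ℂ → ℂ) (hω : ∀ z, ω z = (z + (a:ℂ)) / (1 + (a:ℂ) * z)) :
    ∀ z ∈ ball (0:ℂ) 1,
      1 - z - (lam:ℂ) * z * (∫ t in (0:ℝ)..1, ω (z + (t:ℂ) * (1 - z)) * (1 - z)) ≠ 0 := by
  intro z hz
  rw [mem_ball, dist_zero_right] at hz
  have hω_le : ∀ w ∈ closedBall (0:ℂ) 1, ‖ω w‖ ≤ 1 := fun w hw => by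
    rw [hω]
    exact norm_mobius_le_one (abs_le.2 ⟨by linarith, ha1.le⟩) (mem_closedBall_zero_iff.1 hw)
  have hI := norm_integral_segment_le (convex_closedBall 0 1) hω_le
    (mem_closedBall_zero_iff.2 hz.le) (w := 1) (by simp)
  have hlz : ‖(lam:ℂ) * z‖ < 1 := by
    rw [norm_mul, norm_real, Real.norm_of_nonneg hlam.le]
    nlinarith [norm_nonneg z]
  refine one_sub_sub_mul_ne_zero hlz (by rintro rfl; simp at hz) ?_
  simpa using hI
end

section
/- Let 0 < λ < 1 and let f ∈ U(λ) have the form f(z) = z/(1 − a₂ z + λ z ∫₀^z ω(t) dt), where ω is analytic on 𝔻 with |ω(z)| ≤ 1 and ω(0) = a, |a| < 1. Then |a₂| ≤ 1 + λ v(|a|), where v(x) = ∫₀¹ (x+t)/(1+xt) dt. -/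
/-!
Suppose `‖a₂‖ > 1 + λ v(‖a‖)`. Schwarz–Pick gives `‖ω w‖ ≤ (‖a‖ + ‖w‖) / (1 + ‖a‖ ‖w‖)`, whence
`‖λ z ∫₀^z ω‖ ≤ λ v(‖a‖)`, so `ψ z = (1 + λ z ∫₀^z ω) / a₂` maps the unit disc into a closed disc
of radius `k < 1`. Such a holomorphic map has a fixed point: Schwarz–Pick applied to `ψ / k'`,
`k < k' < 1`, shows that `ψ` contracts the pseudo-hyperbolic distance by `2k' / (1 + k'²) < 1`,
so the orbit of `0` converges. At the fixed point the denominator `1 - a₂ z + λ z ∫₀^z ω` vanishes.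
-/

open Metric Set Filter ComplexConjugate

/-- The involutive automorphism of the unit disc exchanging `a` and `0`; `‖mobius a z‖` is the
pseudo-hyperbolic distance between `a` and `z`. -/
noncomputable def mobius (a z : ℂ) : ℂ := (a - z) / (1 - conj a * z)

lemma mobius_self (a : ℂ) : mobius a a = 0 := by simp [mobius]

lemma mobius_zero_left (z : ℂ) : mobius 0 z = -z := by simp [mobius]

lemma mobius_zero_right (a : ℂ) : mobius a 0 = a := by simp [mobius]

lemma norm_one_sub_conj_mul_sq_sub_norm_sub_sq (u v : ℂ) :
    ‖1 - conj u * v‖ ^ 2 - ‖u - v‖ ^ 2 = (1 - ‖u‖ ^ 2) * (1 - ‖v‖ ^ 2) := by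
  simp only [Complex.sq_norm, Complex.normSq_apply, Complex.sub_re, Complex.sub_im,
    Complex.mul_re, Complex.mul_im, Complex.one_re, Complex.one_im, Complex.conj_re,
    Complex.conj_im]
  ring

lemma one_sub_conj_mul_ne_zero {u v : ℂ} (h : ‖u‖ * ‖v‖ < 1) : 1 - conj u * v ≠ 0 := by
  intro h0
  have : ‖conj u * v‖ = 1 := by rw [← sub_eq_zero.mp h0, norm_one]
  rw [norm_mul, Complex.norm_conj] at this
  exact h.ne this

lemma norm_sub_le_norm_one_sub_conj_mul {u v : ℂ} (hu : ‖u‖ ≤ 1) (hv : ‖v‖ ≤ 1) :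
    ‖u - v‖ ≤ ‖1 - conj u * v‖ := by
  have := norm_one_sub_conj_mul_sq_sub_norm_sub_sq u v
  have : 0 ≤ (1 - ‖u‖ ^ 2) * (1 - ‖v‖ ^ 2) := by
    apply mul_nonneg <;> nlinarith [norm_nonneg u, norm_nonneg v]
  exact (sq_le_sq₀ (norm_nonneg _) (norm_nonneg _)).mp (by linarith)

lemma norm_sub_lt_norm_one_sub_conj_mul {u v : ℂ} (hu : ‖u‖ < 1) (hv : ‖v‖ < 1) :
    ‖u - v‖ < ‖1 - conj u * v‖ := by
  have := norm_one_sub_conj_mul_sq_sub_norm_sub_sq u v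
  have : 0 < (1 - ‖u‖ ^ 2) * (1 - ‖v‖ ^ 2) := by
    apply mul_pos <;> nlinarith [norm_nonneg u, norm_nonneg v]
  exact (sq_lt_sq₀ (norm_nonneg _) (norm_nonneg _)).mp (by linarith)

lemma norm_mobius_le_one_s12 {a z : ℂ} (ha : ‖a‖ < 1) (hz : ‖z‖ ≤ 1) : ‖mobius a z‖ ≤ 1 := by
  rw [mobius, norm_div]
  exact div_le_one_of_le₀ (norm_sub_le_norm_one_sub_conj_mul ha.le hz) (norm_nonneg _)

lemma norm_mobius_lt_one {a z : ℂ} (ha : ‖a‖ < 1) (hz : ‖z‖ < 1) : ‖mobius a z‖ < 1 := by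
  have hD : 1 - conj a * z ≠ 0 := one_sub_conj_mul_ne_zero (by nlinarith [norm_nonneg z])
  rw [mobius, norm_div, div_lt_one (norm_pos_iff.mpr hD)]
  exact norm_sub_lt_norm_one_sub_conj_mul ha hz

lemma mobius_mobius {a z : ℂ} (ha : ‖a‖ < 1) (hz : ‖z‖ ≤ 1) : mobius a (mobius a z) = z := by
  have hD : 1 - conj a * z ≠ 0 := one_sub_conj_mul_ne_zero (by nlinarith [norm_nonneg a])
  have ha' : 1 - conj a * a ≠ 0 := one_sub_conj_mul_ne_zero (by nlinarith [norm_nonneg a])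
  have hnum : a - mobius a z = z * (1 - conj a * a) / (1 - conj a * z) := by
    rw [mobius, eq_div_iff hD, sub_mul, div_mul_cancel₀ _ hD]; ring
  have hden : 1 - conj a * mobius a z = (1 - conj a * a) / (1 - conj a * z) := by
    rw [mobius, eq_div_iff hD, sub_mul, mul_div_assoc', div_mul_cancel₀ _ hD]; ring
  rw [mobius, hnum, hden, div_div_div_cancel_right₀ hD, mul_div_cancel_right₀ _ ha']

lemma differentiableOn_mobius {a : ℂ} (ha : ‖a‖ < 1) :
    DifferentiableOn ℂ (mobius a) (closedBall 0 1) := by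
  refine DifferentiableOn.div (by fun_prop) (by fun_prop) fun z hz ↦ ?_
  exact one_sub_conj_mul_ne_zero <|
    (mul_le_of_le_one_right (norm_nonneg a) (mem_closedBall_zero_iff.mp hz)).trans_lt ha

lemma norm_sub_le_two_mul_norm_mobius {u v : ℂ} (hu : ‖u‖ < 1) (hv : ‖v‖ ≤ 1) :
    ‖u - v‖ ≤ 2 * ‖mobius u v‖ := by
  have hD : 1 - conj u * v ≠ 0 := one_sub_conj_mul_ne_zero (by nlinarith [norm_nonneg u])
  have hD2 : ‖1 - conj u * v‖ ≤ 2 := by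
    calc ‖1 - conj u * v‖ ≤ 1 + ‖u‖ * ‖v‖ := by
          simpa [Complex.norm_conj] using norm_sub_le (1 : ℂ) (conj u * v)
      _ ≤ 2 := by nlinarith [norm_nonneg u, norm_nonneg v]
  calc ‖u - v‖ = ‖mobius u v‖ * ‖1 - conj u * v‖ := by
        rw [mobius, norm_div, div_mul_cancel₀ _ (norm_ne_zero_iff.mpr hD)]
    _ ≤ ‖mobius u v‖ * 2 := by gcongr
    _ = 2 * ‖mobius u v‖ := mul_comm _ _

theorem norm_mobius_apply_le_norm_mobius {ψ : ℂ → ℂ} (hd : DifferentiableOn ℂ ψ (ball 0 1))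
    (hψ : MapsTo ψ (ball 0 1) (closedBall 0 1)) {u v : ℂ} (hu : ‖u‖ < 1) (hv : ‖v‖ < 1)
    (hψu : ‖ψ u‖ < 1) : ‖mobius (ψ u) (ψ v)‖ ≤ ‖mobius u v‖ := by
  have hmaps_u : MapsTo (mobius u) (ball 0 1) (ball 0 1) := fun z hz ↦
    mem_ball_zero_iff.mpr (norm_mobius_lt_one hu (mem_ball_zero_iff.mp hz))
  set g := mobius (ψ u) ∘ ψ ∘ mobius u
  have hg_diff : DifferentiableOn ℂ g (ball 0 1) :=
    (differentiableOn_mobius hψu).comp (hd.comp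
      ((differentiableOn_mobius hu).mono ball_subset_closedBall) hmaps_u) (hψ.comp hmaps_u)
  have hg_maps : MapsTo g (ball 0 1) (closedBall 0 1) := fun z hz ↦
    mem_closedBall_zero_iff.mpr
      (norm_mobius_le_one_s12 hψu (mem_closedBall_zero_iff.mp (hψ (hmaps_u hz))))
  have hg_zero : g 0 = 0 := by simp [g, mobius_zero_right, mobius_self]
  have hg_v : g (mobius u v) = mobius (ψ u) (ψ v) := by
    simp [g, mobius_mobius hu hv.le]
  simpa [hg_v] using
    Complex.norm_le_norm_of_mapsTo_ball hg_diff hg_maps hg_zero (norm_mobius_lt_one hu hv)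

lemma one_add_mul_norm_one_sub_le {K : ℝ} (hK0 : 0 ≤ K) (hK1 : K ≤ 1) {w : ℂ} (hw : ‖w‖ ≤ 1) :
    (1 + K) * ‖1 - w‖ ≤ 2 * ‖1 - K * w‖ := by
  have hsq : ∀ c : ℝ, ‖1 - c * w‖ ^ 2 = 1 - 2 * c * w.re + c ^ 2 * ‖w‖ ^ 2 := fun c ↦ by
    simp only [Complex.sq_norm, Complex.normSq_apply, Complex.sub_re, Complex.sub_im,
      Complex.mul_re, Complex.mul_im, Complex.one_re, Complex.one_im, Complex.ofReal_re,
      Complex.ofReal_im]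
    ring
  have hre : -‖w‖ ≤ w.re := (abs_le.mp (Complex.abs_re_le_norm w)).1
  have h1 := hsq 1
  have hK := hsq K
  simp only [Complex.ofReal_one, one_mul] at h1
  refine (sq_le_sq₀ (by positivity) (by positivity)).mp ?_
  rw [mul_pow, mul_pow, h1, hK]
  -- the difference of the two sides is
  -- `(1 - K) ((1 - ‖w‖) (3 + K + ‖w‖ (1 + 3K)) + 2 (1 - K) (re w + ‖w‖))`
  nlinarith [mul_nonneg (sub_nonneg.mpr hK1) (mul_nonneg (sub_nonneg.mpr hw)
    (by positivity : (0 : ℝ) ≤ 3 + K + ‖w‖ * (1 + 3 * K))),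
    mul_nonneg (sub_nonneg.mpr hK1)
      (mul_nonneg (sub_nonneg.mpr hK1) (by linarith : 0 ≤ w.re + ‖w‖))]

lemma norm_mobius_mul_le {k : ℝ} (hk0 : 0 ≤ k) (hk1 : k ≤ 1) {α β : ℂ} (hα : ‖α‖ < 1)
    (hβ : ‖β‖ ≤ 1) : ‖mobius (k * α) (k * β)‖ ≤ 2 * k / (1 + k ^ 2) * ‖mobius α β‖ := by
  have hw : ‖conj α * β‖ ≤ 1 := by
    rw [norm_mul, Complex.norm_conj]; exact mul_le_one₀ hα.le (norm_nonneg _) hβ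
  have hD : 0 < ‖1 - conj α * β‖ :=
    norm_pos_iff.mpr (one_sub_conj_mul_ne_zero
      ((mul_le_of_le_one_right (norm_nonneg _) hβ).trans_lt hα))
  have hkey := one_add_mul_norm_one_sub_le (sq_nonneg k) (pow_le_one₀ hk0 hk1) hw
  have hD' : 0 < ‖1 - ((k ^ 2 : ℝ) : ℂ) * (conj α * β)‖ := by nlinarith
  have hmob : mobius (k * α) (k * β) = k * (α - β) / (1 - ((k ^ 2 : ℝ) : ℂ) * (conj α * β)) := by
    simp only [mobius, map_mul, Complex.conj_ofReal]; push_cast; ring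
  rw [hmob, mobius, norm_div, norm_div, norm_mul, Complex.norm_real, Real.norm_of_nonneg hk0,
    div_mul_div_comm, div_le_div_iff₀ hD' (by positivity)]
  calc k * ‖α - β‖ * ((1 + k ^ 2) * ‖1 - conj α * β‖)
      ≤ k * ‖α - β‖ * (2 * ‖1 - ((k ^ 2 : ℝ) : ℂ) * (conj α * β)‖) := by gcongr
    _ = 2 * k * ‖α - β‖ * ‖1 - ((k ^ 2 : ℝ) : ℂ) * (conj α * β)‖ := by ring

theorem norm_mobius_apply_le_mul_norm_mobius {ψ : ℂ → ℂ} {k : ℝ} (hk0 : 0 < k) (hk1 : k ≤ 1)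
    (hd : DifferentiableOn ℂ ψ (ball 0 1)) (hψ : MapsTo ψ (ball 0 1) (ball 0 k)) {u v : ℂ}
    (hu : ‖u‖ < 1) (hv : ‖v‖ < 1) :
    ‖mobius (ψ u) (ψ v)‖ ≤ 2 * k / (1 + k ^ 2) * ‖mobius u v‖ := by
  set χ : ℂ → ℂ := fun z ↦ ψ z / k
  have hkC : (k : ℂ) ≠ 0 := Complex.ofReal_ne_zero.mpr hk0.ne'
  have hψχ : ∀ z, ψ z = k * χ z := fun z ↦ (mul_div_cancel₀ _ hkC).symm
  have hχ_lt : ∀ z, ‖z‖ < 1 → ‖χ z‖ < 1 := fun z hz ↦ by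
    have := mem_ball_zero_iff.mp (hψ (mem_ball_zero_iff.mpr hz))
    rwa [norm_div, Complex.norm_real, Real.norm_of_nonneg hk0.le, div_lt_one hk0]
  have hχ_maps : MapsTo χ (ball 0 1) (closedBall 0 1) := fun z hz ↦
    mem_closedBall_zero_iff.mpr (hχ_lt z (mem_ball_zero_iff.mp hz)).le
  rw [hψχ u, hψχ v]
  calc ‖mobius (k * χ u) (k * χ v)‖ ≤ 2 * k / (1 + k ^ 2) * ‖mobius (χ u) (χ v)‖ :=
        norm_mobius_mul_le hk0.le hk1 (hχ_lt u hu) (hχ_lt v hv).le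
    _ ≤ 2 * k / (1 + k ^ 2) * ‖mobius u v‖ := by
        gcongr
        exact norm_mobius_apply_le_norm_mobius (hd.div_const _) hχ_maps hu hv (hχ_lt u hu)

theorem exists_isFixedPt_of_mapsTo_closedBall {ψ : ℂ → ℂ} {k : ℝ} (hk : k < 1)
    (hd : DifferentiableOn ℂ ψ (ball 0 1)) (hψ : MapsTo ψ (ball 0 1) (closedBall 0 k)) :
    ∃ z ∈ ball (0 : ℂ) 1, Function.IsFixedPt ψ z := by
  have hk0 : 0 ≤ k := nonempty_closedBall.mp ⟨_, hψ (mem_ball_self one_pos)⟩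
  obtain ⟨k', hkk', hk'⟩ := exists_between hk
  set q := 2 * k' / (1 + k' ^ 2)
  have hq : q < 1 := by
    rw [div_lt_one (by positivity)]; nlinarith [mul_pos (sub_pos.mpr hk') (sub_pos.mpr hk')]
  have hq0 : 0 ≤ q := div_nonneg (by linarith) (by positivity)
  set z : ℕ → ℂ := fun n ↦ ψ^[n] 0
  have hz_succ : ∀ n, z (n + 1) = ψ (z n) := fun n ↦ Function.iterate_succ_apply' ψ n 0
  have hz_succ_le : ∀ n, ‖z (n + 1)‖ ≤ k := fun n ↦ by
    induction n with
    | zero => exact mem_closedBall_zero_iff.mp (hψ (mem_ball_self one_pos))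
    | succ n ih =>
      rw [hz_succ]
      exact mem_closedBall_zero_iff.mp (hψ (by simpa using ih.trans_lt hk))
  have hz : ∀ n, ‖z n‖ < 1
    | 0 => by simp [z]
    | n + 1 => (hz_succ_le n).trans_lt hk
  set ρ : ℕ → ℝ := fun n ↦ ‖mobius (z (n + 1)) (z n)‖
  have hρ : ∀ n, ρ n ≤ ρ 0 * q ^ n := fun n ↦ by
    induction n with
    | zero => simp
    | succ n ih =>
      calc ρ (n + 1) ≤ q * ρ n := by
            have := norm_mobius_apply_le_mul_norm_mobius (hk0.trans_lt hkk') hk'.le hd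
              (hψ.mono_right (closedBall_subset_ball hkk')) (hz (n + 1)) (hz n)
            rwa [← hz_succ, ← hz_succ] at this
        _ ≤ q * (ρ 0 * q ^ n) := mul_le_mul_of_nonneg_left ih hq0
        _ = ρ 0 * q ^ (n + 1) := by ring
  have hcauchy : CauchySeq z := cauchySeq_of_le_geometric q (2 * ρ 0) hq fun n ↦ by
    rw [dist_comm, dist_eq_norm]
    calc ‖z (n + 1) - z n‖ ≤ 2 * ρ n := norm_sub_le_two_mul_norm_mobius (hz _) (hz _).le
      _ ≤ 2 * (ρ 0 * q ^ n) := by gcongr; exact hρ n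
      _ = 2 * ρ 0 * q ^ n := by ring
  obtain ⟨L, hL⟩ := cauchySeq_tendsto_of_complete hcauchy
  have hL_le : ‖L‖ ≤ k := by
    have := (tendsto_add_atTop_iff_nat 1).mpr hL
    exact le_of_tendsto this.norm (Eventually.of_forall hz_succ_le)
  have hL_mem : L ∈ ball (0 : ℂ) 1 := mem_ball_zero_iff.mpr (hL_le.trans_lt hk)
  exact ⟨L, hL_mem, isFixedPt_of_tendsto_iterate hL
    (hd.continuousOn.continuousAt (isOpen_ball.mem_nhds hL_mem))⟩

lemma exists_eq_zero_of_norm_one_add_le {g : ℂ → ℂ} (hg : DifferentiableOn ℂ g (ball 0 1))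
    {M : ℝ} (hM : ∀ z ∈ ball (0 : ℂ) 1, ‖1 + g z‖ ≤ M) {c : ℂ} (hc : M < ‖c‖) :
    ∃ z ∈ ball (0 : ℂ) 1, 1 - c * z + g z = 0 := by
  have hc_pos : 0 < ‖c‖ := ((norm_nonneg _).trans (hM 0 (mem_ball_self one_pos))).trans_lt hc
  have hc0 : c ≠ 0 := norm_pos_iff.mp hc_pos
  have hmaps : MapsTo (fun z ↦ (1 + g z) / c) (ball 0 1) (closedBall 0 (M / ‖c‖)) :=
    fun z hz ↦ by
      rw [mem_closedBall_zero_iff, norm_div]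
      exact div_le_div_of_nonneg_right (hM z hz) hc_pos.le
  obtain ⟨z, hz, hfix⟩ := exists_isFixedPt_of_mapsTo_closedBall (ψ := fun z ↦ (1 + g z) / c)
    ((div_lt_one hc_pos).mpr hc) (((differentiableOn_const 1).add hg).div_const c) hmaps
  refine ⟨z, hz, ?_⟩
  rw [Function.IsFixedPt, div_eq_iff hc0] at hfix
  linear_combination hfix

lemma norm_le_of_norm_mobius_le {a b : ℂ} {r : ℝ} (ha : ‖a‖ < 1) (hb : ‖b‖ ≤ 1) (hr : 0 ≤ r)
    (h : ‖mobius a b‖ ≤ r) : ‖b‖ ≤ (‖a‖ + r) / (1 + ‖a‖ * r) := by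
  set A := ‖a‖
  set x := ‖b‖
  have hA0 : 0 ≤ A := norm_nonneg a
  have hx0 : 0 ≤ x := norm_nonneg b
  rw [le_div_iff₀ (by positivity)]
  rcases le_total 1 r with hr1 | hr1
  · nlinarith [mul_nonneg (sub_nonneg.mpr ha.le) (sub_nonneg.mpr hr1)]
  have hAx : A * x < 1 := (mul_le_of_le_one_right hA0 hb).trans_lt ha
  have hD := one_sub_conj_mul_ne_zero hAx
  have hD_ge : 1 - A * x ≤ ‖1 - conj a * b‖ := by
    simpa [A, x, Complex.norm_conj] using norm_sub_norm_le (1 : ℂ) (conj a * b)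
  have hab : ‖a - b‖ ≤ r * ‖1 - conj a * b‖ := by
    rwa [mobius, norm_div, div_le_iff₀ (norm_pos_iff.mpr hD)] at h
  have hid := norm_one_sub_conj_mul_sq_sub_norm_sub_sq a b
  have hsq : (x - A) ^ 2 ≤ (r * (1 - A * x)) ^ 2 := by
    have h1 : ‖a - b‖ ^ 2 ≤ r ^ 2 * ‖1 - conj a * b‖ ^ 2 := by
      rw [← mul_pow]; exact pow_le_pow_left₀ (norm_nonneg _) hab 2
    have h2 : (1 - A * x) ^ 2 ≤ ‖1 - conj a * b‖ ^ 2 :=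
      pow_le_pow_left₀ (by linarith) hD_ge 2
    nlinarith [mul_le_mul_of_nonneg_left h2 (by nlinarith : (0 : ℝ) ≤ 1 - r ^ 2)]
  nlinarith [abs_le_of_sq_le_sq' hsq (by positivity)]

lemma norm_apply_le_of_mapsTo_closedBall {ω : ℂ → ℂ} (hd : DifferentiableOn ℂ ω (ball 0 1))
    (hω : MapsTo ω (ball 0 1) (closedBall 0 1)) (h0 : ‖ω 0‖ < 1) {w : ℂ} (hw : ‖w‖ < 1) :
    ‖ω w‖ ≤ (‖ω 0‖ + ‖w‖) / (1 + ‖ω 0‖ * ‖w‖) := by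
  refine norm_le_of_norm_mobius_le h0 (mem_closedBall_zero_iff.mp (hω (mem_ball_zero_iff.mpr hw)))
    (norm_nonneg w) ?_
  simpa [mobius_zero_left] using norm_mobius_apply_le_norm_mobius hd hω (by simp) hw h0

lemma integral_mul_eq_sub_of_hasDerivAt {F ω : ℂ → ℂ} {R : ℝ}
    (hF : ∀ w ∈ ball (0 : ℂ) R, HasDerivAt F (ω w) w) (hω : ContinuousOn ω (ball 0 R)) {z : ℂ}
    (hz : z ∈ ball (0 : ℂ) R) : ∫ t in (0 : ℝ)..1, ω (t * z) * z = F z - F 0 := by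
  have hseg : ∀ t ∈ uIcc (0 : ℝ) 1, (t : ℂ) * z ∈ ball (0 : ℂ) R := fun t ht ↦ by
    rw [uIcc_of_le zero_le_one] at ht
    rw [mem_ball_zero_iff, norm_mul, Complex.norm_real, Real.norm_of_nonneg ht.1]
    exact (mul_le_of_le_one_left (norm_nonneg z) ht.2).trans_lt (mem_ball_zero_iff.mp hz)
  have := intervalIntegral.integral_eq_sub_of_hasDerivAt (f := fun t : ℝ ↦ F (t * z))
    (fun t ht ↦ ((hF _ (hseg t ht)).comp (t : ℂ) (hasDerivAt_mul_const z)).comp_ofReal)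
    ((hω.comp (by fun_prop) hseg).mul continuousOn_const).intervalIntegrable
  simpa using this

lemma norm_mul_integral_le {ω : ℂ → ℂ} (hd : DifferentiableOn ℂ ω (ball 0 1))
    (hω : MapsTo ω (ball 0 1) (closedBall 0 1)) (h0 : ‖ω 0‖ < 1) {z : ℂ} (hz : ‖z‖ < 1) :
    ‖z * ∫ t in (0 : ℝ)..1, ω (t * z) * z‖ ≤ ∫ t in (0 : ℝ)..1, (‖ω 0‖ + t) / (1 + ‖ω 0‖ * t) := by
  set A := ‖ω 0‖
  have hA0 : 0 ≤ A := norm_nonneg _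
  rw [← intervalIntegral.integral_const_mul]
  refine intervalIntegral.norm_integral_le_of_norm_le zero_le_one
    (MeasureTheory.ae_of_all _ fun t ht ↦ ?_) ?_
  · have ht0 := ht.1.le
    have htz : ‖(t : ℂ) * z‖ = t * ‖z‖ := by
      rw [norm_mul, Complex.norm_real, Real.norm_of_nonneg ht0]
    have htz1 : ‖(t : ℂ) * z‖ < 1 :=
      htz ▸ (mul_le_of_le_one_left (norm_nonneg z) ht.2).trans_lt hz
    have hωtz := norm_apply_le_of_mapsTo_closedBall hd hω h0 htz1
    rw [htz] at hωtz
    have hmono : (A + t * ‖z‖) / (1 + A * (t * ‖z‖)) ≤ (A + t) / (1 + A * t) := by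
      rw [div_le_div_iff₀ (by positivity) (by positivity)]
      nlinarith [mul_nonneg (mul_nonneg ht0 (sub_nonneg.mpr hz.le))
        (mul_nonneg (sub_nonneg.mpr h0.le) (by linarith : 0 ≤ 1 + A))]
    calc ‖z * (ω (t * z) * z)‖ = ‖z‖ ^ 2 * ‖ω (t * z)‖ := by rw [norm_mul, norm_mul]; ring
      _ ≤ 1 * ‖ω (t * z)‖ := by gcongr; exact pow_le_one₀ (norm_nonneg z) hz.le
      _ ≤ (A + t) / (1 + A * t) := by rw [one_mul]; exact hωtz.trans hmono
  · refine ContinuousOn.intervalIntegrable (ContinuousOn.div (by fun_prop) (by fun_prop) ?_)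
    intro t ht
    rw [uIcc_of_le zero_le_one] at ht
    have := mul_nonneg hA0 ht.1
    positivity

theorem stmt_12_general (lam : ℝ) (hlam : 0 < lam)
    (ω : ℂ → ℂ) (a a₂ : ℂ)
    (hω : DifferentiableOn ℂ ω (ball (0:ℂ) 1))
    (hbound : ∀ z ∈ ball (0:ℂ) 1, ‖ω z‖ ≤ 1)
    (h0 : ω 0 = a) (ha : ‖a‖ < 1)
    (hden : ∀ z ∈ ball (0:ℂ) 1,
      1 - a₂ * z + (lam:ℂ) * z * (∫ t in (0:ℝ)..1, ω ((t:ℂ) * z) * z) ≠ 0) :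
    ‖a₂‖ ≤ 1 + lam * ∫ t in (0:ℝ)..1, (‖a‖ + t) / (1 + ‖a‖ * t) := by
  have hmaps : MapsTo ω (ball 0 1) (closedBall 0 1) := fun z hz ↦
    mem_closedBall_zero_iff.mpr (hbound z hz)
  obtain ⟨F, hF0, hF⟩ := hω.isExactOn_ball.with_val_at 0 0
  have hI : ∀ z ∈ ball (0 : ℂ) 1, ∫ t in (0 : ℝ)..1, ω (t * z) * z = F z := fun z hz ↦ by
    rw [integral_mul_eq_sub_of_hasDerivAt hF hω.continuousOn hz, hF0, sub_zero]
  have hF_diff : DifferentiableOn ℂ F (ball 0 1) := fun z hz ↦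
    (hF z hz).differentiableAt.differentiableWithinAt
  have hdiff : DifferentiableOn ℂ (fun z ↦ (lam : ℂ) * z * ∫ t in (0 : ℝ)..1, ω (t * z) * z)
      (ball 0 1) :=
    (show DifferentiableOn ℂ (fun z ↦ (lam : ℂ) * z * F z) (ball 0 1) by fun_prop).congr
      fun z hz ↦ by rw [hI z hz]
  have hM : ∀ z ∈ ball (0 : ℂ) 1, ‖1 + (lam : ℂ) * z * ∫ t in (0 : ℝ)..1, ω (t * z) * z‖ ≤
      1 + lam * ∫ t in (0 : ℝ)..1, (‖a‖ + t) / (1 + ‖a‖ * t) := fun z hz ↦ by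
    refine (norm_add_le _ _).trans ?_
    rw [norm_one, mul_assoc, norm_mul, Complex.norm_real, Real.norm_of_nonneg hlam.le, ← h0]
    gcongr
    exact norm_mul_integral_le hω hmaps (h0 ▸ ha) (mem_ball_zero_iff.mp hz)
  by_contra! hlt
  obtain ⟨z, hz, hzero⟩ := exists_eq_zero_of_norm_one_add_le hdiff hM hlt
  exact hden z hz hzero

theorem stmt_12 (lam : ℝ) (hlam : 0 < lam) (hlam1 : lam < 1)
    (ω : ℂ → ℂ) (a a₂ : ℂ) (f : ℂ → ℂ)
    (hω : DifferentiableOn ℂ ω (ball (0:ℂ) 1))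
    (hbound : ∀ z ∈ ball (0:ℂ) 1, ‖ω z‖ ≤ 1)
    (h0 : ω 0 = a) (ha : ‖a‖ < 1)
    (hden : ∀ z ∈ ball (0:ℂ) 1,
      1 - a₂ * z + (lam:ℂ) * z * (∫ t in (0:ℝ)..1, ω ((t:ℂ) * z) * z) ≠ 0)
    (hf : ∀ z ∈ ball (0:ℂ) 1,
      f z = z / (1 - a₂ * z + (lam:ℂ) * z * (∫ t in (0:ℝ)..1, ω ((t:ℂ) * z) * z)))
    (hU : ∀ z ∈ ball (0:ℂ) 1, z ≠ 0 → ‖(z / f z)^2 * deriv f z - 1‖ < lam) :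
    ‖a₂‖ ≤ 1 + lam * ∫ t in (0:ℝ)..1, (‖a‖ + t) / (1 + ‖a‖ * t) :=
  stmt_12_general lam hlam ω a a₂ hω hbound h0 ha hden
end

section
/- Suppose φ : 𝔻 → 𝔻 is analytic on a neighborhood of the closed unit disk with φ(0) = 0, there exists θ₀ with φ(e^{iθ₀}) = −1, and φ is not a rotation z ↦ e^{iθ}z. Write m(θ₀) = e^{iθ₀} φ'(e^{iθ₀})/φ(e^{iθ₀}). Then m(θ₀) is real and m(θ₀) > 1. -/
/-!
Jack's lemma: if `g` maps the unit disc into the closed disc, `g 0 = 0` and `‖g z₀‖ = 1 = ‖z₀‖`,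
then `B = z₀ g'(z₀) / g(z₀)` is real and `≥ 1`. Indeed Schwarz's `‖g z‖ ≤ ‖z‖` along each chord
`t ↦ z₀ (1 + t k)`, `re k < 0`, entering the disc at `z₀` gives `re (B k) ≤ re k` for all such `k`.

Applied to `φ` this gives `m ≥ 1`. Writing `φ z = z ψ z`, we have `m = 1 + z₀ ψ'(z₀) / ψ(z₀)`, so it
remains to see `ψ'(z₀) ≠ 0`. As `φ` is not a rotation, `‖ψ 0‖ < 1` by the equality case of the
Schwarz lemma; Jack's lemma for `ψ` followed by the disc automorphism sending `ψ 0` to `0` shows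
that this composite, hence `ψ`, has nonzero derivative at `z₀`.
-/

open Metric Complex Filter Set Topology ComplexConjugate

theorem HasDerivAt.nonneg_of_eventually_le_right {f : ℝ → ℝ} {f' x : ℝ} (hf : HasDerivAt f f' x)
    (h : ∀ᶠ t in 𝓝[>] 0, f x ≤ f (x + t)) : 0 ≤ f' := by
  refine ge_of_tendsto hf.tendsto_slope_zero_right ?_
  filter_upwards [h, self_mem_nhdsWithin] with t ht (htpos : 0 < t)
  exact smul_nonneg (inv_nonneg.mpr htpos.le) (sub_nonneg.mpr ht)

namespace Complex

theorem hasDerivAt_norm_sq_comp_add_real_mul {f : ℂ → ℂ} {f' z v : ℂ}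
    (hf : HasDerivAt f f' z) :
    HasDerivAt (fun t : ℝ => ‖f (z + t * v)‖ ^ 2) (2 * (conj (f z) * f' * v).re) 0 := by
  have hline : HasDerivAt (fun u : ℂ => z + u * v) v ((0 : ℝ) : ℂ) := by
    simpa using ((hasDerivAt_id _).mul_const v).const_add z
  have h := (hf.comp_of_eq _ hline (by simp)).comp_ofReal.norm_sq
  rw [Complex.inner] at h
  refine h.congr_deriv ?_
  simp only [Function.comp_apply, ofReal_zero, zero_mul, add_zero]
  ring_nf

theorem exists_one_le_eq_of_forall_re_mul_le_re {B : ℂ}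
    (h : ∀ k : ℂ, k.re < 0 → (B * k).re ≤ k.re) : ∃ m : ℝ, 1 ≤ m ∧ B = m := by
  have hre := h (-1) (by norm_num)
  simp only [mul_re, neg_re, one_re, neg_im, one_im, neg_zero, mul_zero, sub_zero] at hre
  refine ⟨B.re, by linarith, Complex.ext rfl ?_⟩
  by_contra him
  rw [ofReal_im] at him
  have hk := h ⟨-1, -B.re / B.im⟩ (by norm_num)
  simp only [mul_re] at hk
  field_simp at hk
  linarith

theorem eventually_norm_one_add_mul_lt_one {k : ℂ} (hk : k.re < 0) :
    ∀ᶠ t : ℝ in 𝓝[>] 0, ‖1 + t * k‖ < 1 := by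
  have hk0 : 0 < ‖k‖ ^ 2 := by
    have : k ≠ 0 := fun h => by simp [h] at hk
    positivity
  filter_upwards [Ioo_mem_nhdsGT (div_pos (by linarith : 0 < -2 * k.re) hk0)] with t ⟨ht0, ht⟩
  rw [lt_div_iff₀ hk0] at ht
  rw [← sq_lt_one_iff₀ (norm_nonneg _), ← normSq_eq_norm_sq]
  have : normSq (1 + t * k) = 1 + 2 * t * k.re + t ^ 2 * ‖k‖ ^ 2 := by
    rw [← normSq_eq_norm_sq]; simp [normSq_apply]; ring
  nlinarith

theorem exists_one_le_mul_deriv_div_eq_of_mapsTo_ball {g : ℂ → ℂ} {z₀ : ℂ}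
    (hd : DifferentiableOn ℂ g (ball 0 1)) (h_maps : MapsTo g (ball 0 1) (closedBall 0 1))
    (h₀ : g 0 = 0) (hz₀ : ‖z₀‖ = 1) (hg : DifferentiableAt ℂ g z₀) (hgz₀ : ‖g z₀‖ = 1) :
    ∃ m : ℝ, 1 ≤ m ∧ z₀ * deriv g z₀ / g z₀ = m := by
  have hinv : (g z₀)⁻¹ = conj (g z₀) := by
    rw [inv_def, normSq_eq_norm_sq, hgz₀]; simp
  have hz₀conj : conj z₀ * z₀ = 1 := by
    rw [mul_comm, mul_conj, normSq_eq_norm_sq, hz₀]; simp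
  set B := conj (g z₀) * deriv g z₀ * z₀
  rw [show z₀ * deriv g z₀ / g z₀ = B by rw [div_eq_mul_inv, hinv]; ring]
  refine exists_one_le_eq_of_forall_re_mul_le_re fun k hk => ?_
  have hF : HasDerivAt (fun t : ℝ => ‖z₀ + t * (z₀ * k)‖ ^ 2 - ‖g (z₀ + t * (z₀ * k))‖ ^ 2)
      (2 * k.re - 2 * (B * k).re) 0 := by
    refine ((hasDerivAt_norm_sq_comp_add_real_mul (f := id) (hasDerivAt_id z₀)).sub
      (hasDerivAt_norm_sq_comp_add_real_mul hg.hasDerivAt)).congr_deriv ?_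
    simp only [id, B, mul_one, ← mul_assoc, hz₀conj, one_mul]
  have hle := hF.nonneg_of_eventually_le_right ?_
  · linarith
  filter_upwards [eventually_norm_one_add_mul_lt_one hk] with t ht
  have hz : ‖z₀ + t * (z₀ * k)‖ < 1 := by
    rwa [show z₀ + t * (z₀ * k) = z₀ * (1 + t * k) by ring, norm_mul, hz₀, one_mul]
  have := norm_le_norm_of_mapsTo_ball hd h_maps h₀ hz
  simp only [zero_add, ofReal_zero, zero_mul, add_zero, hz₀, hgz₀, sub_self]
  nlinarith [norm_nonneg (g (z₀ + t * (z₀ * k)))]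

theorem exists_rotation_of_norm_deriv_eq_one {f : ℂ → ℂ}
    (hd : DifferentiableOn ℂ f (ball 0 1)) (h_maps : MapsTo f (ball 0 1) (closedBall 0 1))
    (h₀ : f 0 = 0) (h : ‖deriv f 0‖ = 1) :
    ∃ θ : ℝ, ∀ z ∈ ball (0 : ℂ) 1, f z = exp (θ * I) * z := by
  have h_affine := affine_of_mapsTo_ball_of_norm_dslope_eq_div hd (by rwa [h₀])
    (mem_ball_self one_pos) (by rw [dslope_same, h, div_one])
  refine ⟨(deriv f 0).arg, fun z hz => ?_⟩
  have hexp : exp ((deriv f 0).arg * I) = deriv f 0 := by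
    simpa [h] using norm_mul_exp_arg_mul_I (deriv f 0)
  rw [h_affine hz, hexp, h₀, dslope_same]
  simp [mul_comm]

noncomputable def blaschkeFactor (c u : ℂ) : ℂ := (u - c) / (1 - conj c * u)

theorem blaschkeFactor_self (c : ℂ) : blaschkeFactor c c = 0 := by
  simp [blaschkeFactor]

theorem one_sub_conj_mul_ne_zero {c u : ℂ} (hc : ‖c‖ < 1) (hu : ‖u‖ ≤ 1) :
    1 - conj c * u ≠ 0 := by
  have : ‖conj c * u‖ < 1 := by
    rw [norm_mul, norm_conj]
    nlinarith [norm_nonneg c, norm_nonneg u]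
  intro h
  rw [← sub_eq_zero.mp h, norm_one] at this
  exact this.false

theorem one_sub_normSq_blaschkeFactor {c u : ℂ} (hc : ‖c‖ < 1) (hu : ‖u‖ ≤ 1) :
    1 - normSq (blaschkeFactor c u) =
      (1 - normSq u) * (1 - normSq c) / normSq (1 - conj c * u) := by
  have hden : normSq (1 - conj c * u) ≠ 0 :=
    normSq_eq_zero.not.mpr (one_sub_conj_mul_ne_zero hc hu)
  rw [blaschkeFactor, normSq_div, eq_div_iff hden, sub_mul, div_mul_cancel₀ _ hden]
  simp only [normSq_apply, sub_re, sub_im, mul_re, mul_im, one_re, one_im, conj_re, conj_im]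
  ring

theorem norm_blaschkeFactor_le_one {c u : ℂ} (hc : ‖c‖ < 1) (hu : ‖u‖ ≤ 1) :
    ‖blaschkeFactor c u‖ ≤ 1 := by
  have h := one_sub_normSq_blaschkeFactor hc hu
  have : 0 ≤ (1 - normSq u) * (1 - normSq c) / normSq (1 - conj c * u) := by
    rw [normSq_eq_norm_sq u, normSq_eq_norm_sq c]
    have := norm_nonneg u
    have := norm_nonneg c
    exact div_nonneg (mul_nonneg (by nlinarith) (by nlinarith)) (normSq_nonneg _)
  rw [← sq_le_one_iff₀ (norm_nonneg _), ← normSq_eq_norm_sq]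
  linarith

theorem norm_blaschkeFactor_eq_one {c u : ℂ} (hc : ‖c‖ < 1) (hu : ‖u‖ = 1) :
    ‖blaschkeFactor c u‖ = 1 := by
  have h := one_sub_normSq_blaschkeFactor hc hu.le
  rw [normSq_eq_norm_sq u, hu, one_pow, sub_self, zero_mul, zero_div, sub_eq_zero,
    normSq_eq_norm_sq] at h
  exact (pow_eq_one_iff_of_nonneg (norm_nonneg _) two_ne_zero).mp h.symm

theorem differentiableAt_blaschkeFactor {c u : ℂ} (hc : ‖c‖ < 1) (hu : ‖u‖ ≤ 1) :
    DifferentiableAt ℂ (blaschkeFactor c) u :=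
  (differentiableAt_id.sub_const c).div
    ((differentiableAt_id.const_mul _).const_sub 1) (one_sub_conj_mul_ne_zero hc hu)

theorem deriv_ne_zero_of_mapsTo_ball_of_norm_eq_one {ψ : ℂ → ℂ} {z₀ : ℂ}
    (hd : DifferentiableOn ℂ ψ (ball 0 1)) (h_maps : MapsTo ψ (ball 0 1) (closedBall 0 1))
    (h₀ : ‖ψ 0‖ < 1) (hz₀ : ‖z₀‖ = 1) (hψ : DifferentiableAt ℂ ψ z₀) (hψz₀ : ‖ψ z₀‖ = 1) :
    deriv ψ z₀ ≠ 0 := by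
  set g := blaschkeFactor (ψ 0) ∘ ψ
  have hg_diff : DifferentiableOn ℂ g (ball 0 1) := fun z hz =>
    ((differentiableAt_blaschkeFactor h₀ (mem_closedBall_zero_iff.mp (h_maps hz))).comp z
      (hd.differentiableAt (isOpen_ball.mem_nhds hz))).differentiableWithinAt
  have hg_maps : MapsTo g (ball 0 1) (closedBall 0 1) := fun z hz =>
    mem_closedBall_zero_iff.mpr
      (norm_blaschkeFactor_le_one h₀ (mem_closedBall_zero_iff.mp (h_maps hz)))
  have hBz₀ : DifferentiableAt ℂ (blaschkeFactor (ψ 0)) (ψ z₀) :=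
    differentiableAt_blaschkeFactor h₀ hψz₀.le
  obtain ⟨m, hm, hm_eq⟩ := exists_one_le_mul_deriv_div_eq_of_mapsTo_ball hg_diff hg_maps (blaschkeFactor_self _) hz₀ (hBz₀.comp z₀ hψ) (norm_blaschkeFactor_eq_one h₀ hψz₀)
  intro h
  rw [deriv_comp _ hBz₀ hψ, h, mul_zero, mul_zero, zero_div] at hm_eq
  norm_cast at hm_eq
  linarith

theorem mul_deriv_div_eq_one_add_of_eq_mul {φ ψ : ℂ → ℂ} {z₀ : ℂ} (hφψ : ∀ z, φ z = z * ψ z)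
    (hψ : DifferentiableAt ℂ ψ z₀) (hz₀ : z₀ ≠ 0) (hψz₀ : ψ z₀ ≠ 0) :
    z₀ * deriv φ z₀ / φ z₀ = 1 + z₀ * deriv ψ z₀ / ψ z₀ := by
  have hderiv : HasDerivAt φ (ψ z₀ + z₀ * deriv ψ z₀) z₀ := by
    rw [show φ = fun z => z * ψ z from funext hφψ]
    simpa using (hasDerivAt_id' z₀).fun_mul hψ.hasDerivAt
  rw [hderiv.deriv, hφψ]
  field_simp

end Complex

theorem stmt_15 (φ : ℂ → ℂ) (s : Set ℂ) (hs : IsOpen s)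
    (hsub : closedBall (0:ℂ) 1 ⊆ s)
    (hφ : DifferentiableOn ℂ φ s)
    (h0 : φ 0 = 0)
    (hmap : ∀ z ∈ ball (0:ℂ) 1, ‖φ z‖ < 1)
    (hrot : ¬ ∃ θ : ℝ, ∀ z ∈ ball (0:ℂ) 1, φ z = Complex.exp (θ * Complex.I) * z)
    (θ₀ : ℝ) (hθ₀ : φ (Complex.exp (θ₀ * Complex.I)) = -1) :
    ∃ m : ℝ, 1 < m ∧
      Complex.exp (θ₀ * Complex.I) * deriv φ (Complex.exp (θ₀ * Complex.I)) /
        φ (Complex.exp (θ₀ * Complex.I)) = (m : ℂ) := by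
  set z₀ := exp (θ₀ * I)
  have hz₀ : ‖z₀‖ = 1 := norm_exp_ofReal_mul_I θ₀
  have hs₀ : s ∈ 𝓝 z₀ := hs.mem_nhds (hsub (mem_closedBall_zero_iff.mpr hz₀.le))
  have hφ_ball : DifferentiableOn ℂ φ (ball 0 1) := hφ.mono (ball_subset_closedBall.trans hsub)
  have hφ_maps : MapsTo φ (ball 0 1) (closedBall 0 1) := fun z hz =>
    mem_closedBall_zero_iff.mpr (hmap z hz).le
  obtain ⟨m, hm, hm_eq⟩ := exists_one_le_mul_deriv_div_eq_of_mapsTo_ball hφ_ball hφ_maps h0 hz₀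
    (hφ.differentiableAt hs₀) (by simp [hθ₀])
  refine ⟨m, hm.lt_of_ne ?_, hm_eq⟩
  rintro rfl
  set ψ := dslope φ 0
  have hφψ : ∀ z, φ z = z * ψ z := fun z => by simpa [h0] using (sub_smul_dslope φ 0 z).symm
  have hψ : DifferentiableOn ℂ ψ s :=
    (differentiableOn_dslope (hs.mem_nhds (hsub (mem_closedBall_self zero_le_one)))).mpr hφ
  have hψz₀ : ‖ψ z₀‖ = 1 := by simpa [hφψ, hz₀] using congrArg norm hθ₀
  have hψ_maps : MapsTo ψ (ball 0 1) (closedBall 0 1) := fun z hz => by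
    simpa using norm_dslope_le_div_of_mapsTo_ball hφ_ball (by rwa [h0]) hz
  have hψ0 : ‖ψ 0‖ < 1 := by
    refine (mem_closedBall_zero_iff.mp (hψ_maps (mem_ball_self one_pos))).lt_of_ne fun h => hrot ?_
    exact exists_rotation_of_norm_deriv_eq_one hφ_ball hφ_maps h0 (by rwa [← dslope_same])
  have hψ' := deriv_ne_zero_of_mapsTo_ball_of_norm_eq_one
    (hψ.mono (ball_subset_closedBall.trans hsub)) hψ_maps hψ0 hz₀ (hψ.differentiableAt hs₀) hψz₀
  have hz₀_ne : z₀ ≠ 0 := norm_ne_zero_iff.mp (by simp [hz₀])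
  have hψz₀_ne : ψ z₀ ≠ 0 := norm_ne_zero_iff.mp (by simp [hψz₀])
  rw [mul_deriv_div_eq_one_add_of_eq_mul hφψ (hψ.differentiableAt hs₀) hz₀_ne hψz₀_ne,
    ofReal_one, add_eq_left] at hm_eq
  simp [hz₀_ne, hψz₀_ne, hψ'] at hm_eq
end
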